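/- arXiv:1805.07336 — 9 statements merged into one kernel-verified Lean document; each statement's English description precedes it below -/
import Mathlib

section
/- Let T : V ⇉ V be monotone and let ṽ_i, v_i ∈ V for i = 1,…,k satisfy v_i ∈ T(ṽ_i). Define ṽ^a = (1/k)∑ṽ_i, v^a = (1/k)∑v_i, and ε^a = (1/k)∑⟨v_i, ṽ_i − ṽ^a⟩. Then ε^a ≥ 0. -/
open RealInnerProductSpace

theorem stmt_5 {V : Type*} [NormedAddCommGroup V] [InnerProductSpace ℝ V]
    [FiniteDimensional ℝ V] (T : V → Set V)
    (hmono : ∀ u v u2 v2 : V, u2 ∈ T u → v2 ∈ T v → 0 ≤ ⟪u - v, u2 - v2⟫)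
    (k : ℕ) (hk : 0 < k) (v2 v : ℕ → V)
    (hin : ∀ i ∈ Finset.range k, v i ∈ T (v2 i)) :
    0 ≤ (1 / (k : ℝ)) *
      ∑ i ∈ Finset.range k,
        ⟪v i, v2 i - (1 / (k : ℝ)) • ∑ j ∈ Finset.range k, v2 j⟫ := by
  have hkR : (0:ℝ) < (k:ℝ) := by exact_mod_cast hk
  set D : ℝ := ∑ i ∈ Finset.range k, ∑ j ∈ Finset.range k, ⟪v i, v2 i - v2 j⟫ with hDdef
  have hD : 0 ≤ D := by
    have h2 : 2 * D = ∑ i ∈ Finset.range k, ∑ j ∈ Finset.range k,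
        ⟪v i - v j, v2 i - v2 j⟫ := by
      rw [hDdef, two_mul]
      nth_rewrite 2 [Finset.sum_comm]
      rw [← Finset.sum_add_distrib]
      refine Finset.sum_congr rfl fun i hi => ?_
      rw [← Finset.sum_add_distrib]
      refine Finset.sum_congr rfl fun j hj => ?_
      simp only [inner_sub_left, inner_sub_right]
      ring
    have hpos : 0 ≤ ∑ i ∈ Finset.range k, ∑ j ∈ Finset.range k,
        ⟪v i - v j, v2 i - v2 j⟫ := by
      refine Finset.sum_nonneg fun i hi => Finset.sum_nonneg fun j hj => ?_
      have := hmono (v2 i) (v2 j) (v i) (v j) (hin i hi) (hin j hj)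
      rwa [real_inner_comm] at this
    linarith
  have key : ∑ i ∈ Finset.range k,
      ⟪v i, v2 i - (1 / (k : ℝ)) • ∑ j ∈ Finset.range k, v2 j⟫ = (1 / (k:ℝ)) * D := by
    rw [hDdef, Finset.mul_sum]
    refine Finset.sum_congr rfl fun i hi => ?_
    rw [Finset.mul_sum]
    simp only [inner_sub_right, inner_smul_right, inner_sum, Finset.mul_sum] at *
    simp only [mul_sub]
    rw [Finset.sum_sub_distrib, Finset.sum_const, Finset.card_range, nsmul_eq_mul]
    have h1 : (k:ℝ) * (1/(k:ℝ) * ⟪v i, v2 i⟫) = ⟪v i, v2 i⟫ := by field_simp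
    rw [h1]
  rw [key]
  positivity
end

section
/- Let T : V ⇉ V be monotone and let ṽ_i, v_i ∈ V for i = 1,…,k satisfy v_i ∈ T(ṽ_i). With ṽ^a, v^a, ε^a as the averages ṽ^a = (1/k)∑ṽ_i, v^a = (1/k)∑v_i, ε^a = (1/k)∑⟨v_i, ṽ_i − ṽ^a⟩, one has v^a ∈ T^{[ε^a]}(ṽ^a), i.e., ⟨v^a − ũ, ṽ^a − u⟩ ≥ −ε^a for all (u, ũ) with ũ ∈ T(u). -/
/-!
Expanding the inner products and using `∑ᵢ ṽᵢ = k ṽᵃ`, `∑ᵢ vᵢ = k vᵃ` gives the identity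
`(1/k) ∑ᵢ ⟪ṽᵢ - u, vᵢ - ũ⟫ = ⟪ṽᵃ - u, vᵃ - ũ⟫ + εᵃ`, and each term on the left is nonnegative
by monotonicity of `T`.
-/

open RealInnerProductSpace

open Finset in
theorem Finset.sum_inner_sub_sub_eq_card_mul_inner_add {ι V : Type*} [NormedAddCommGroup V]
    [InnerProductSpace ℝ V] (s : Finset ι) {x y : ι → V} {x₀ y₀ : V}
    (hx : ∑ i ∈ s, x i = (#s : ℝ) • x₀) (hy : ∑ i ∈ s, y i = (#s : ℝ) • y₀) (a b : V) :
    ∑ i ∈ s, ⟪x i - a, y i - b⟫ = #s * ⟪x₀ - a, y₀ - b⟫ + ∑ i ∈ s, ⟪y i, x i - x₀⟫ := by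
  simp only [inner_sub_left, inner_sub_right, sum_sub_distrib, sum_const, nsmul_eq_mul,
    ← sum_inner, ← inner_sum, hx, hy, real_inner_smul_left, real_inner_smul_right,
    real_inner_comm (y _) (x _), real_inner_comm y₀ x₀]
  ring

theorem stmt_6_general {V : Type*} [NormedAddCommGroup V] [InnerProductSpace ℝ V]
    (T : V → Set V)
    (hmono : ∀ u v u2 v2 : V, u2 ∈ T u → v2 ∈ T v → 0 ≤ ⟪u - v, u2 - v2⟫)
    (k : ℕ) (hk : 0 < k) (v2 v : ℕ → V)
    (hin : ∀ i ∈ Finset.range k, v i ∈ T (v2 i))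
    (wa va : V) (εa : ℝ)
    (hwa : wa = (1 / (k : ℝ)) • ∑ j ∈ Finset.range k, v2 j)
    (hva : va = (1 / (k : ℝ)) • ∑ j ∈ Finset.range k, v j)
    (hεa : εa = (1 / (k : ℝ)) * ∑ i ∈ Finset.range k, ⟪v i, v2 i - wa⟫) :
    ∀ u u2 : V, u2 ∈ T u → -εa ≤ ⟪va - u2, wa - u⟫ := by
  intro u u2 hu
  have hk' : (k : ℝ) ≠ 0 := Nat.cast_ne_zero.mpr hk.ne'
  have hsum {w : V} {f : ℕ → V} (hw : w = (1 / (k : ℝ)) • ∑ j ∈ Finset.range k, f j) :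
      ∑ j ∈ Finset.range k, f j = ((Finset.range k).card : ℝ) • w := by
    rw [Finset.card_range, hw, smul_smul, mul_one_div_cancel hk', one_smul]
  have hnonneg : 0 ≤ ∑ i ∈ Finset.range k, ⟪v2 i - u, v i - u2⟫ :=
    Finset.sum_nonneg fun i hi => hmono _ _ _ _ (hin i hi) hu
  rw [Finset.sum_inner_sub_sub_eq_card_mul_inner_add _ (hsum hwa) (hsum hva), Finset.card_range]
    at hnonneg
  have hscaled : 0 ≤ (k : ℝ) * (⟪wa - u, va - u2⟫ + εa) := by
    rwa [mul_add, hεa, ← mul_assoc, mul_one_div_cancel hk', one_mul]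
  rw [real_inner_comm]
  linarith [nonneg_of_mul_nonneg_right hscaled (Nat.cast_pos.mpr hk)]

theorem stmt_6 {V : Type*} [NormedAddCommGroup V] [InnerProductSpace ℝ V]
    [FiniteDimensional ℝ V] (T : V → Set V)
    (hmono : ∀ u v u2 v2 : V, u2 ∈ T u → v2 ∈ T v → 0 ≤ ⟪u - v, u2 - v2⟫)
    (k : ℕ) (hk : 0 < k) (v2 v : ℕ → V)
    (hin : ∀ i ∈ Finset.range k, v i ∈ T (v2 i))
    (wa va : V) (εa : ℝ)
    (hwa : wa = (1 / (k : ℝ)) • ∑ j ∈ Finset.range k, v2 j)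
    (hva : va = (1 / (k : ℝ)) • ∑ j ∈ Finset.range k, v j)
    (hεa : εa = (1 / (k : ℝ)) * ∑ i ∈ Finset.range k, ⟪v i, v2 i - wa⟫) :
    ∀ u u2 : V, u2 ∈ T u → -εa ≤ ⟪va - u2, wa - u⟫ :=
  stmt_6_general T hmono k hk v2 v hin wa va εa hwa hva hεa
end

section
/- Let f : V → ℝ ∪ {+∞} be a proper convex function and let ṽ_i, v_i ∈ V for i = 1,…,k satisfy v_i ∈ ∂f(ṽ_i). Define ṽ^a = (1/k)∑ṽ_i, v^a = (1/k)∑v_i, and ε^a = (1/k)∑⟨v_i, ṽ_i − ṽ^a⟩. Then v^a ∈ ∂_{ε^a} f(ṽ^a). -/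
/-!
Fix `w` with `f w` finite; then every `f ṽᵢ` is finite, so everything lives in the effective domain,
where `f` is a real convex function. Average the subgradient inequalities
`f ṽᵢ + ⟪vᵢ, w - ṽᵢ⟫ ≤ f w`, bound `(1/k) ∑ f ṽᵢ` below by `f ṽᵃ` (Jensen), and split
`⟪vᵢ, w - ṽᵢ⟫ = ⟪vᵢ, w - ṽᵃ⟫ - ⟪vᵢ, ṽᵢ - ṽᵃ⟫`: the first terms average to `⟪vᵃ, w - ṽᵃ⟫`,
the second to `εᵃ`.
-/

open RealInnerProductSpace Finset

theorem convexOn_toReal_of_ereal {E : Type*} [AddCommGroup E] [Module ℝ E] {f : E → EReal}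
    (hnb : ∀ x, f x ≠ ⊥)
    (hconv : ∀ a b : E, ∀ t : ℝ, 0 ≤ t → t ≤ 1 →
      f (t • a + (1 - t) • b) ≤ (t : EReal) * f a + ((1 - t : ℝ) : EReal) * f b) :
    ConvexOn ℝ {x | f x ≠ ⊤} (fun x => (f x).toReal) := by
  have hconv_finite : ∀ a b, f a ≠ ⊤ → f b ≠ ⊤ → ∀ t : ℝ, 0 ≤ t → t ≤ 1 →
      f (t • a + (1 - t) • b) ≤ ((t * (f a).toReal + (1 - t) * (f b).toReal : ℝ) : EReal) := by
    intro a b ha hb t ht0 ht1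
    rw [EReal.coe_add, EReal.coe_mul, EReal.coe_mul, EReal.coe_toReal ha (hnb a),
      EReal.coe_toReal hb (hnb b)]
    exact hconv a b t ht0 ht1
  refine ⟨?_, ?_⟩
  · intro a ha b hb s t hs ht hst
    obtain rfl : t = 1 - s := by linarith
    exact ne_top_of_le_ne_top (EReal.coe_ne_top _) (hconv_finite a b ha hb s hs (by linarith))
  · intro a ha b hb s t hs ht hst
    obtain rfl : t = 1 - s := by linarith
    have hle := hconv_finite a b ha hb s hs (by linarith)
    rw [← EReal.coe_toReal (ne_top_of_le_ne_top (EReal.coe_ne_top _) hle) (hnb _),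
      EReal.coe_le_coe_iff] at hle
    exact hle

theorem sum_mul_inner_sub_eq {ι V : Type*} [NormedAddCommGroup V] [InnerProductSpace ℝ V]
    (s : Finset ι) (μ : ι → ℝ) (u x : ι → V) (w a : V) :
    ∑ i ∈ s, μ i * ⟪u i, w - x i⟫ =
      ⟪∑ i ∈ s, μ i • u i, w - a⟫ - ∑ i ∈ s, μ i * ⟪u i, x i - a⟫ := by
  rw [sum_inner, ← sum_sub_distrib]
  refine sum_congr rfl fun i _ => ?_
  rw [real_inner_smul_left, ← mul_sub, ← inner_sub_right]
  congr 2
  abel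

theorem ConvexOn.map_sum_smul_add_inner_sub_le {ι V : Type*} [NormedAddCommGroup V]
    [InnerProductSpace ℝ V] {C : Set V} {g : V → ℝ} (hg : ConvexOn ℝ C g) {s : Finset ι}
    {μ : ι → ℝ} (hμ₀ : ∀ i ∈ s, 0 ≤ μ i) (hμ₁ : ∑ i ∈ s, μ i = 1) {x u : ι → V}
    (hx : ∀ i ∈ s, x i ∈ C) {w : V} {c : ℝ} (hsub : ∀ i ∈ s, g (x i) + ⟪u i, w - x i⟫ ≤ c) :
    g (∑ i ∈ s, μ i • x i) +
        (⟪∑ i ∈ s, μ i • u i, w - ∑ i ∈ s, μ i • x i⟫ -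
          ∑ i ∈ s, μ i * ⟪u i, x i - ∑ j ∈ s, μ j • x j⟫) ≤ c := by
  have hjensen : g (∑ i ∈ s, μ i • x i) ≤ ∑ i ∈ s, μ i * g (x i) := hg.map_sum_le hμ₀ hμ₁ hx
  have havg : ∑ i ∈ s, μ i * (g (x i) + ⟪u i, w - x i⟫) ≤ ∑ i ∈ s, μ i * c :=
    sum_le_sum fun i hi => mul_le_mul_of_nonneg_left (hsub i hi) (hμ₀ i hi)
  rw [← sum_mul, hμ₁, one_mul, sum_congr rfl fun i _ => mul_add (μ i) _ _, sum_add_distrib,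
    sum_mul_inner_sub_eq s μ u x w (∑ j ∈ s, μ j • x j)] at havg
  linarith

theorem stmt_7_general {V : Type*} [NormedAddCommGroup V] [InnerProductSpace ℝ V]
    (f : V → EReal)
    (hfnb : ∀ v, f v ≠ ⊥)
    (hconv : ∀ a b : V, ∀ t : ℝ, 0 ≤ t → t ≤ 1 →
      f (t • a + (1 - t) • b) ≤ (t : EReal) * f a + ((1 - t : ℝ) : EReal) * f b)
    (k : ℕ) (hk : 0 < k) (v2 v : ℕ → V)
    (hin : ∀ i ∈ Finset.range k, ∀ w : V,
      f (v2 i) + ((⟪v i, w - v2 i⟫ : ℝ) : EReal) ≤ f w)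
    (wa va : V) (εa : ℝ)
    (hwa : wa = (1 / (k : ℝ)) • ∑ j ∈ Finset.range k, v2 j)
    (hva : va = (1 / (k : ℝ)) • ∑ j ∈ Finset.range k, v j)
    (hεa : εa = (1 / (k : ℝ)) * ∑ i ∈ Finset.range k, ⟪v i, v2 i - wa⟫) :
    ∀ w : V, f wa + ((⟪va, w - wa⟫ - εa : ℝ) : EReal) ≤ f w := by
  intro w
  rcases eq_or_ne (f w) ⊤ with hw | hw
  · simp [hw]
  have hdom : ∀ i ∈ range k, f (v2 i) ≠ ⊤ := fun i hi htop => by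
    simpa [htop, hw] using hin i hi w
  have hsub : ∀ i ∈ range k, (f (v2 i)).toReal + ⟪v i, w - v2 i⟫ ≤ (f w).toReal := fun i hi => by
    have h := hin i hi w
    rwa [← EReal.coe_toReal (hdom i hi) (hfnb _), ← EReal.coe_toReal hw (hfnb _),
      ← EReal.coe_add, EReal.coe_le_coe_iff] at h
  have hweights : ∑ _i ∈ range k, 1 / (k : ℝ) = 1 := by
    rw [sum_const, card_range, nsmul_eq_mul, mul_one_div_cancel (by positivity)]
  have hconvR := convexOn_toReal_of_ereal hfnb hconv
  rw [smul_sum] at hwa hva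
  rw [mul_sum] at hεa
  have hwa_dom : f wa ≠ ⊤ := by
    rw [hwa]
    exact hconvR.1.sum_mem (fun _ _ => by positivity) hweights hdom
  have hreal := hconvR.map_sum_smul_add_inner_sub_le (fun _ _ => by positivity) hweights hdom hsub
  rw [← hwa, ← hva, ← hεa] at hreal
  rw [← EReal.coe_toReal hwa_dom (hfnb _), ← EReal.coe_toReal hw (hfnb _), ← EReal.coe_add,
    EReal.coe_le_coe_iff]
  exact hreal

theorem stmt_7 {V : Type*} [NormedAddCommGroup V] [InnerProductSpace ℝ V]
    [FiniteDimensional ℝ V] (f : V → EReal)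
    (hfne : ∃ v, f v ≠ ⊤) (hfnb : ∀ v, f v ≠ ⊥)
    (hconv : ∀ a b : V, ∀ t : ℝ, 0 ≤ t → t ≤ 1 →
      f (t • a + (1 - t) • b) ≤ (t : EReal) * f a + ((1 - t : ℝ) : EReal) * f b)
    (k : ℕ) (hk : 0 < k) (v2 v : ℕ → V)
    (hin : ∀ i ∈ Finset.range k, ∀ w : V,
      f (v2 i) + ((⟪v i, w - v2 i⟫ : ℝ) : EReal) ≤ f w)
    (wa va : V) (εa : ℝ)
    (hwa : wa = (1 / (k : ℝ)) • ∑ j ∈ Finset.range k, v2 j)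
    (hva : va = (1 / (k : ℝ)) • ∑ j ∈ Finset.range k, v j)
    (hεa : εa = (1 / (k : ℝ)) * ∑ i ∈ Finset.range k, ⟪v i, v2 i - wa⟫) :
    ∀ w : V, f wa + ((⟪va, w - wa⟫ - εa : ℝ) : EReal) ≤ f w :=
  stmt_7_general f hfnb hconv k hk v2 v hin wa va εa hwa hva hεa
end

section
/- For τ₁ ∈ [0,1), the upper bound (1 − 2τ₁ + √((1 − 2τ₁)² + 4(1 − τ₁)))/(2(1 − τ₁)) of the admissible stepsize interval is at most (1 + √5)/2, with equality when τ₁ = 0. -/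
theorem stmt_9 (τ₁ : ℝ) (h0 : 0 ≤ τ₁) (h1 : τ₁ < 1) :
    (1 - 2 * τ₁ + Real.sqrt ((1 - 2 * τ₁) ^ 2 + 4 * (1 - τ₁))) / (2 * (1 - τ₁)) ≤
      (1 + Real.sqrt 5) / 2 ∧
    (τ₁ = 0 →
      (1 - 2 * τ₁ + Real.sqrt ((1 - 2 * τ₁) ^ 2 + 4 * (1 - τ₁))) / (2 * (1 - τ₁)) =
        (1 + Real.sqrt 5) / 2) := by
  have h5 : Real.sqrt 5 ^ 2 = 5 := Real.sq_sqrt (by norm_num)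
  have h5ge : (2 : ℝ) ≤ Real.sqrt 5 := by
    nlinarith [Real.sqrt_nonneg 5]
  have hR : (0 : ℝ) ≤ Real.sqrt 5 + (1 - Real.sqrt 5) * τ₁ := by nlinarith
  have hsq : Real.sqrt ((1 - 2 * τ₁) ^ 2 + 4 * (1 - τ₁)) ≤
      Real.sqrt 5 + (1 - Real.sqrt 5) * τ₁ := by
    rw [show Real.sqrt 5 + (1 - Real.sqrt 5) * τ₁ =
        Real.sqrt ((Real.sqrt 5 + (1 - Real.sqrt 5) * τ₁) ^ 2) from
      (Real.sqrt_sq hR).symm]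
    apply Real.sqrt_le_sqrt
    nlinarith [mul_nonneg (mul_nonneg h0 (sub_nonneg.mpr h1.le))
      (sub_nonneg.mpr h5ge)]
  have hden : (0 : ℝ) < 2 * (1 - τ₁) := by linarith
  constructor
  · rw [div_le_div_iff₀ hden (by norm_num)]
    nlinarith [hsq]
  · intro h
    subst h
    norm_num
end

section
/- Let τ₁ ∈ [0,1) and θ ∈ (0, (1 − 2τ₁ + √((1−2τ₁)² + 4(1−τ₁)))/(2(1−τ₁))). Then the symmetric 2×2 matrix θ·[[1 − τ₁, (1 − θ)(1 − τ₁)], [(1 − θ)(1 − τ₁), 2 − θ − τ₁]] is positive definite. -/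
/-!
Factoring out `θ > 0` leaves `M = !![a, (1 - θ) a; (1 - θ) a, 2 - θ - τ₁]` with `a = 1 - τ₁ > 0`, and
`det M = a (1 + (1 - 2τ₁) θ - a θ²)`. The bound on `θ` is the positive root of `a θ² - (1 - 2τ₁) θ - 1`,
so the determinant is positive for `0 < θ` below it, and the 2×2 determinant criterion applies.
-/

open Matrix

/-- Completing the square: `a (a x² + 2 b x y + d y²) = (a x + b y)² + (a d - b²) y²`. -/
theorem Matrix.posDef_fin_two {a b d : ℝ} (ha : 0 < a) (hdet : 0 < a * d - b ^ 2) :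
    (!![a, b; b, d]).PosDef := by
  refine posDef_iff_dotProduct_mulVec.mpr ⟨?_, fun x hx => ?_⟩
  · ext i j
    fin_cases i <;> fin_cases j <;> rfl
  · have hx' : x 0 ≠ 0 ∨ x 1 ≠ 0 := by
      by_contra! h
      exact hx (funext fun i => by fin_cases i <;> simp [h.1, h.2])
    simp only [dotProduct, mulVec, Fin.sum_univ_two, of_apply, cons_val', cons_val_zero,
      cons_val_one, empty_val', cons_val_fin_one, Pi.star_apply, star_trivial]
    rcases eq_or_ne (x 1) 0 with h1 | h1
    · have h0 : x 0 ≠ 0 := hx'.resolve_right (not_not.mpr h1)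
      rw [h1]
      nlinarith [mul_pos ha (sq_pos_of_ne_zero h0)]
    · nlinarith [sq_nonneg (a * x 0 + b * x 1), mul_pos hdet (sq_pos_of_ne_zero h1)]

/-- For `a > 0`, the polynomial `a t² - b t - 1` is negative on `[0, r)`, where `r` is its
positive root. -/
theorem quadratic_neg_of_lt_root {a b t : ℝ} (ha : 0 < a) (ht : 0 ≤ t)
    (hlt : t < (b + √(b ^ 2 + 4 * a)) / (2 * a)) : a * t ^ 2 - b * t - 1 < 0 := by
  set s := √(b ^ 2 + 4 * a)
  have hs : s ^ 2 = b ^ 2 + 4 * a := Real.sq_sqrt (by positivity)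
  have hbs : b < s := by nlinarith [Real.sqrt_nonneg (b ^ 2 + 4 * a)]
  have hlt' : 2 * a * t < b + s := by rwa [lt_div_iff₀ (by positivity), mul_comm] at hlt
  have hfactor : 4 * a * (a * t ^ 2 - b * t - 1) = (2 * a * t - b - s) * (2 * a * t - b + s) := by
    linear_combination hs
  have hneg : (2 * a * t - b - s) * (2 * a * t - b + s) < 0 :=
    mul_neg_of_neg_of_pos (by linarith) (by nlinarith)
  exact neg_of_mul_neg_right (hfactor ▸ hneg) (by positivity)

theorem stmt_11_general (τ₁ θ : ℝ) (h1 : τ₁ < 1) (hθ0 : 0 < θ)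
    (hθ : θ < (1 - 2 * τ₁ + Real.sqrt ((1 - 2 * τ₁) ^ 2 + 4 * (1 - τ₁))) /
      (2 * (1 - τ₁))) :
    (θ • !![1 - τ₁, (1 - θ) * (1 - τ₁); (1 - θ) * (1 - τ₁), 2 - θ - τ₁]).PosDef := by
  have ha : 0 < 1 - τ₁ := sub_pos.mpr h1
  have hquad := quadratic_neg_of_lt_root ha hθ0.le hθ
  refine PosDef.smul (posDef_fin_two ha ?_) hθ0
  have hdet : (1 - τ₁) * (2 - θ - τ₁) - ((1 - θ) * (1 - τ₁)) ^ 2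
      = (1 - τ₁) * -((1 - τ₁) * θ ^ 2 - (1 - 2 * τ₁) * θ - 1) := by ring
  rw [hdet]
  exact mul_pos ha (neg_pos.mpr hquad)

theorem stmt_11 (τ₁ θ : ℝ) (h0 : 0 ≤ τ₁) (h1 : τ₁ < 1) (hθ0 : 0 < θ)
    (hθ : θ < (1 - 2 * τ₁ + Real.sqrt ((1 - 2 * τ₁) ^ 2 + 4 * (1 - τ₁))) /
      (2 * (1 - τ₁))) :
    (θ • !![1 - τ₁, (1 - θ) * (1 - τ₁); (1 - θ) * (1 - τ₁), 2 - θ - τ₁]).PosDef :=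
  stmt_11_general τ₁ θ h1 hθ0 hθ
end

section
/- Let τ₁, τ₂ ∈ [0,1) and θ satisfy the stepsize condition θ ∈ (0, (1 − 2τ₁ + √((1−2τ₁)² + 4(1−τ₁)))/(2(1−τ₁))). Then there exists σ ∈ [τ₂, 1) such that the symmetric matrix G = [[σ − 1 + (σ − τ₁)θ, (1 − θ)(σ − 1 + (1 − τ₁)θ)], [(1 − θ)(σ − 1 + (1 − τ₁)θ), σ − 1 + (2 − θ − τ₁)θ]] is positive semidefinite. -/
/-!
At `σ = 1` the matrix has diagonal entry `(1 - τ₁) θ > 0` and determinant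
`(1 - τ₁) θ² (1 + (1 - 2τ₁) θ - (1 - τ₁) θ²)`, and the stepsize condition says exactly that
`θ` lies below the positive root of the last factor. So the matrix is positive definite at
`σ = 1`, and by continuity also for all `σ < 1` close enough to `1`, in particular for some
`σ ∈ [τ₂, 1)`.
-/

open Filter Topology Set

theorem Matrix.posDef_fin_two_of_pos_of_sq_lt {a b c : ℝ} (ha : 0 < a) (hdet : b ^ 2 < a * c) :
    (!![a, b; b, c]).PosDef := by
  refine .of_dotProduct_mulVec_pos ?_ fun x hx => ?_
  · ext i j
    fin_cases i <;> fin_cases j <;> rfl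
  simp only [star_trivial, dotProduct, Matrix.mulVec, Fin.sum_univ_two, Matrix.of_apply,
    Matrix.cons_val', Matrix.cons_val_zero, Matrix.cons_val_one, Matrix.empty_val',
    Matrix.cons_val_fin_one]
  have key : a * (x 0 * (a * x 0 + b * x 1) + x 1 * (b * x 0 + c * x 1))
      = (a * x 0 + b * x 1) ^ 2 + (a * c - b ^ 2) * x 1 ^ 2 := by ring
  refine pos_of_mul_pos_right (key ▸ ?_) ha.le
  by_cases h1 : x 1 = 0
  · have h0 : x 0 ≠ 0 := fun h0 => hx (funext fun i => by fin_cases i <;> simp [h0, h1])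
    simp only [h1, mul_zero, add_zero, ne_eq, OfNat.ofNat_ne_zero, not_false_eq_true, zero_pow]
    positivity
  · have := mul_pos (sub_pos.2 hdet) (sq_pos_of_ne_zero h1)
    positivity

theorem one_add_mul_sub_mul_sq_pos {a b θ : ℝ} (ha : 0 < a) (hθ0 : 0 ≤ θ)
    (hθ : θ < (b + Real.sqrt (b ^ 2 + 4 * a)) / (2 * a)) :
    0 < 1 + b * θ - a * θ ^ 2 := by
  set s := Real.sqrt (b ^ 2 + 4 * a)
  have hs : s ^ 2 = b ^ 2 + 4 * a := Real.sq_sqrt (by positivity)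
  have hs0 : 0 ≤ s := Real.sqrt_nonneg _
  have hlt : 2 * a * θ < b + s := by rwa [lt_div_iff₀ (by positivity), mul_comm] at hθ
  have hbs : b < s := by nlinarith
  -- `4a (1 + bθ - aθ²) = (b + s - 2aθ) (2aθ + s - b)`
  nlinarith [mul_pos (sub_pos.2 hlt) (by nlinarith : 0 < 2 * a * θ + s - b)]

theorem stmt_12_general (τ₁ τ₂ θ : ℝ) (h1 : τ₁ < 1)
    (h1' : τ₂ < 1) (hθ0 : 0 < θ)
    (hθ : θ < (1 - 2 * τ₁ + Real.sqrt ((1 - 2 * τ₁) ^ 2 + 4 * (1 - τ₁))) /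
      (2 * (1 - τ₁))) :
    ∃ σ : ℝ, τ₂ ≤ σ ∧ σ < 1 ∧
      (!![σ - 1 + (σ - τ₁) * θ, (1 - θ) * (σ - 1 + (1 - τ₁) * θ);
          (1 - θ) * (σ - 1 + (1 - τ₁) * θ), σ - 1 + (2 - θ - τ₁) * θ]).PosSemidef := by
  have hτ₁ : 0 < 1 - τ₁ := sub_pos.2 h1
  have hF := one_add_mul_sub_mul_sq_pos hτ₁ hθ0.le hθ
  have hdiag : ∀ᶠ σ in 𝓝 (1 : ℝ), 0 < σ - 1 + (σ - τ₁) * θ := by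
    refine ContinuousAt.eventually_lt (by fun_prop) (by fun_prop) ?_
    nlinarith
  have hdet : ∀ᶠ σ in 𝓝 (1 : ℝ), ((1 - θ) * (σ - 1 + (1 - τ₁) * θ)) ^ 2 <
      (σ - 1 + (σ - τ₁) * θ) * (σ - 1 + (2 - θ - τ₁) * θ) := by
    refine ContinuousAt.eventually_lt (by fun_prop) (by fun_prop) ?_
    nlinarith [mul_pos (mul_pos hτ₁ (pow_pos hθ0 2)) hF]
  obtain ⟨σ, ⟨hτ₂σ, hσ1⟩, hσ⟩ :=
    (Eventually.and (Ioo_mem_nhdsLT h1') (nhdsWithin_le_nhds (hdiag.and hdet))).exists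
  exact ⟨σ, hτ₂σ.le, hσ1, (Matrix.posDef_fin_two_of_pos_of_sq_lt hσ.1 hσ.2).posSemidef⟩

theorem stmt_12 (τ₁ τ₂ θ : ℝ) (h0 : 0 ≤ τ₁) (h1 : τ₁ < 1)
    (h0' : 0 ≤ τ₂) (h1' : τ₂ < 1) (hθ0 : 0 < θ)
    (hθ : θ < (1 - 2 * τ₁ + Real.sqrt ((1 - 2 * τ₁) ^ 2 + 4 * (1 - τ₁))) /
      (2 * (1 - τ₁))) :
    ∃ σ : ℝ, τ₂ ≤ σ ∧ σ < 1 ∧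
      (!![σ - 1 + (σ - τ₁) * θ, (1 - θ) * (σ - 1 + (1 - τ₁) * θ);
          (1 - θ) * (σ - 1 + (1 - τ₁) * θ), σ - 1 + (2 - θ - τ₁) * θ]).PosSemidef :=
  stmt_12_general τ₁ τ₂ θ h1 h1' hθ0 hθ
end

section
/- Suppose g : Y → ℝ ∪ {+∞} is proper convex, H : Y → Y is self-adjoint positive semidefinite, and for k and k−1 one has B*(γ_k − (1−θ)γ_{k−1})/θ − H(y_k − y_{k−1}) ∈ ∂g(y_k) and B*(γ_{k−1} − (1−θ)γ_{k−2})/θ − H(y_{k−1} − y_{k−2}) ∈ ∂g(y_{k−1}). Then (1/θ)⟨γ_k − γ_{k−1}, B(y_k − y_{k−1})⟩ ≥ ((1−θ)/θ)⟨γ_{k−1} − γ_{k−2}, B(y_k − y_{k−1})⟩ + (1/2)‖y_k − y_{k−1}‖_H² − (1/2)‖y_{k−1} − y_{k−2}‖_H². -/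
/-!
Writing the two inclusions as `u_k ∈ ∂g(y_k)` and `u_{k-1} ∈ ∂g(y_{k-1})`, monotonicity of `∂g`
gives `⟪u_k - u_{k-1}, y_k - y_{k-1}⟫ ≥ 0`. Expanding, the `B`-terms are exactly those of the
claim, and the cross term `⟪H (y_{k-1} - y_{k-2}), y_k - y_{k-1}⟫` is bounded by
`½‖y_k - y_{k-1}‖_H² + ½‖y_{k-1} - y_{k-2}‖_H²`, the Cauchy–Schwarz/AM–GM inequality for the
semi-inner product `⟪H ·, ·⟫`.
-/

open RealInnerProductSpace

section Subgradient

variable {E : Type*} [NormedAddCommGroup E] [InnerProductSpace ℝ E]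

def IsSubgradientAt (f : E → EReal) (x u : E) : Prop :=
  ∀ w, f x + ((⟪u, w - x⟫ : ℝ) : EReal) ≤ f w

theorem IsSubgradientAt.ne_top {f : E → EReal} {x u : E} (hu : IsSubgradientAt f x u)
    (hf : ∃ z, f z ≠ ⊤) : f x ≠ ⊤ := by
  obtain ⟨z, hz⟩ := hf
  intro hx
  have := hu z
  rw [hx, EReal.top_add_of_ne_bot (EReal.coe_ne_bot _), top_le_iff] at this
  exact hz this

theorem IsSubgradientAt.inner_sub_nonneg {f : E → EReal} {x y u v : E}
    (hu : IsSubgradientAt f x u) (hv : IsSubgradientAt f y v)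
    (hf : ∃ z, f z ≠ ⊤) (hx_bot : f x ≠ ⊥) (hy_bot : f y ≠ ⊥) : 0 ≤ ⟪u - v, x - y⟫ := by
  have hx : f x = ((f x).toReal : EReal) := (EReal.coe_toReal (hu.ne_top hf) hx_bot).symm
  have hy : f y = ((f y).toReal : EReal) := (EReal.coe_toReal (hv.ne_top hf) hy_bot).symm
  have hxy := hu y
  have hyx := hv x
  rw [hx, hy, ← EReal.coe_add, EReal.coe_le_coe_iff] at hxy hyx
  have hneg : ⟪u, y - x⟫ = -⟪u, x - y⟫ := by rw [← inner_neg_right, neg_sub]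
  rw [inner_sub_left]
  linarith

end Subgradient

theorem two_mul_inner_le_of_posSemidef {E : Type*} [NormedAddCommGroup E] [InnerProductSpace ℝ E]
    {H : E →ₗ[ℝ] E} (hsymm : ∀ u w : E, ⟪H u, w⟫ = ⟪u, H w⟫) (hpsd : ∀ v : E, 0 ≤ ⟪H v, v⟫)
    (a b : E) : 2 * ⟪H a, b⟫ ≤ ⟪H a, a⟫ + ⟪H b, b⟫ := by
  have h := hpsd (a - b)
  have hba : ⟪H b, a⟫ = ⟪H a, b⟫ := by rw [hsymm, real_inner_comm]
  simp only [map_sub, inner_sub_left, inner_sub_right] at h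
  linarith

theorem inner_smul_adjoint_sub {Y Γ : Type*} [NormedAddCommGroup Y] [InnerProductSpace ℝ Y]
    [NormedAddCommGroup Γ] [InnerProductSpace ℝ Γ] [FiniteDimensional ℝ Y] [FiniteDimensional ℝ Γ]
    (B : Y →ₗ[ℝ] Γ) (c : ℝ) (γ : Γ) (v d : Y) :
    ⟪c • LinearMap.adjoint B γ - v, d⟫ = c * ⟪γ, B d⟫ - ⟪v, d⟫ := by
  rw [inner_sub_left, real_inner_smul_left, LinearMap.adjoint_inner_left]

theorem stmt_15_general {Y Γ : Type*} [NormedAddCommGroup Y] [InnerProductSpace ℝ Y]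
    [NormedAddCommGroup Γ] [InnerProductSpace ℝ Γ]
    [FiniteDimensional ℝ Y] [FiniteDimensional ℝ Γ]
    (B : Y →ₗ[ℝ] Γ) (g : Y → EReal)
    (hgne : ∃ y, g y ≠ ⊤) (hgnb : ∀ y, g y ≠ ⊥)
    (H : Y →ₗ[ℝ] Y)
    (hHsa : ∀ u w : Y, ⟪H u, w⟫ = ⟪u, H w⟫)
    (hHpsd : ∀ v : Y, 0 ≤ ⟪H v, v⟫)
    (θ : ℝ)
    (yk2 yk1 yk : Y) (γk2 γk1 γk : Γ)
    (hk : ∀ w : Y,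
      g yk + ((⟪(1 / θ) • (LinearMap.adjoint B) (γk - (1 - θ) • γk1) -
        H (yk - yk1), w - yk⟫ : ℝ) : EReal) ≤ g w)
    (hk1 : ∀ w : Y,
      g yk1 + ((⟪(1 / θ) • (LinearMap.adjoint B) (γk1 - (1 - θ) • γk2) -
        H (yk1 - yk2), w - yk1⟫ : ℝ) : EReal) ≤ g w) :
    (1 / θ) * ⟪γk - γk1, B (yk - yk1)⟫ ≥
      ((1 - θ) / θ) * ⟪γk1 - γk2, B (yk - yk1)⟫ +
      (1 / 2) * ⟪H (yk - yk1), yk - yk1⟫ -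
      (1 / 2) * ⟪H (yk1 - yk2), yk1 - yk2⟫ := by
  have hmono := IsSubgradientAt.inner_sub_nonneg (f := g) hk hk1 hgne (hgnb yk) (hgnb yk1)
  rw [inner_sub_left, inner_smul_adjoint_sub, inner_smul_adjoint_sub] at hmono
  have hcross := two_mul_inner_le_of_posSemidef hHsa hHpsd (yk1 - yk2) (yk - yk1)
  simp only [inner_sub_left, real_inner_smul_left] at hmono ⊢
  linear_combination hmono + (1 / 2 : ℝ) * hcross

theorem stmt_15 {Y Γ : Type*} [NormedAddCommGroup Y] [InnerProductSpace ℝ Y]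
    [NormedAddCommGroup Γ] [InnerProductSpace ℝ Γ]
    [FiniteDimensional ℝ Y] [FiniteDimensional ℝ Γ]
    (B : Y →ₗ[ℝ] Γ) (g : Y → EReal)
    (hgne : ∃ y, g y ≠ ⊤) (hgnb : ∀ y, g y ≠ ⊥)
    (H : Y →ₗ[ℝ] Y)
    (hHsa : ∀ u w : Y, ⟪H u, w⟫ = ⟪u, H w⟫)
    (hHpsd : ∀ v : Y, 0 ≤ ⟪H v, v⟫)
    (θ : ℝ) (hθ : 0 < θ)
    (yk2 yk1 yk : Y) (γk2 γk1 γk : Γ)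
    (hk : ∀ w : Y,
      g yk + ((⟪(1 / θ) • (LinearMap.adjoint B) (γk - (1 - θ) • γk1) -
        H (yk - yk1), w - yk⟫ : ℝ) : EReal) ≤ g w)
    (hk1 : ∀ w : Y,
      g yk1 + ((⟪(1 / θ) • (LinearMap.adjoint B) (γk1 - (1 - θ) • γk2) -
        H (yk1 - yk2), w - yk1⟫ : ℝ) : EReal) ≤ g w) :
    (1 / θ) * ⟪γk - γk1, B (yk - yk1)⟫ ≥
      ((1 - θ) / θ) * ⟪γk1 - γk2, B (yk - yk1)⟫ +
      (1 / 2) * ⟪H (yk - yk1), yk - yk1⟫ -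
      (1 / 2) * ⟪H (yk1 - yk2), yk1 - yk2⟫ :=
  stmt_15_general B g hgne hgnb H hHsa hHpsd θ yk2 yk1 yk γk2 γk1 γk hk hk1
end

section
/- Let M be a self-adjoint positive semidefinite operator on Z, T : Z ⇉ Z monotone, and suppose M(z₀ − z₁) ∈ T(z̃₁) and 0 ∈ T(z*). Then ‖z* − z₀‖_M² − ‖z* − z₁‖_M² ≥ ‖z̃₁ − z₀‖_M² − ‖z̃₁ − z₁‖_M². -/
open RealInnerProductSpace

theorem stmt_17 {Z : Type*} [NormedAddCommGroup Z] [InnerProductSpace ℝ Z]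
    [FiniteDimensional ℝ Z] (M : Z →ₗ[ℝ] Z)
    (hMsa : ∀ u w : Z, ⟪M u, w⟫ = ⟪u, M w⟫)
    (hMpsd : ∀ v : Z, 0 ≤ ⟪M v, v⟫)
    (T : Z → Set Z)
    (hmono : ∀ u v u2 v2 : Z, u2 ∈ T u → v2 ∈ T v → 0 ≤ ⟪u - v, u2 - v2⟫)
    (z₀ z₁ zt₁ zs : Z)
    (hincl : M (z₀ - z₁) ∈ T zt₁) (hsol : (0 : Z) ∈ T zs) :
    ⟪M (zt₁ - z₀), zt₁ - z₀⟫ - ⟪M (zt₁ - z₁), zt₁ - z₁⟫ ≤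
      ⟪M (zs - z₀), zs - z₀⟫ - ⟪M (zs - z₁), zs - z₁⟫ := by
  have hm := hmono zt₁ zs (M (z₀ - z₁)) 0 hincl hsol
  simp only [sub_zero] at hm
  have e1 := hMsa z₀ zt₁
  have e2 := hMsa z₁ zt₁
  have e3 := hMsa z₀ zs
  have e4 := hMsa z₁ zs
  simp only [map_sub, inner_sub_left, inner_sub_right] at *
  linarith [real_inner_comm (M z₀) zs, real_inner_comm (M z₁) zs,
    real_inner_comm (M z₀) zt₁, real_inner_comm (M z₁) zt₁,
    real_inner_comm (M zt₁) z₀, real_inner_comm (M zt₁) z₁,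
    real_inner_comm (M zs) z₀, real_inner_comm (M zs) z₁]
end

section
/- Let M be self-adjoint positive semidefinite on Z, σ ∈ [0,1), and suppose sequences {z_k}, {z̃_k} ⊂ Z and {η_k} ⊂ ℝ≥0 satisfy ‖z̃_k − z_k‖_M² + η_k ≤ σ‖z̃_k − z_{k−1}‖_M² + η_{k−1} for all k ≥ 1, together with a point z* and the inequality ‖z* − z_{k−1}‖_M² − ‖z* − z_k‖_M² ≥ ‖z̃_k − z_{k−1}‖_M² − ‖z̃_k − z_k‖_M² for all k ≥ 1. Then ∑_{i=1}^{k} (1 − σ)‖z̃_i − z_{i−1}‖_M² ≤ ‖z* − z₀‖_M² + η₀ for every k ≥ 1. -/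
open RealInnerProductSpace

theorem stmt_19 {Z : Type*} [NormedAddCommGroup Z] [InnerProductSpace ℝ Z]
    [FiniteDimensional ℝ Z] (M : Z →ₗ[ℝ] Z)
    (hMsa : ∀ u w : Z, ⟪M u, w⟫ = ⟪u, M w⟫)
    (hMpsd : ∀ v : Z, 0 ≤ ⟪M v, v⟫)
    (σ : ℝ) (hσ0 : 0 ≤ σ) (hσ1 : σ < 1)
    (z zt : ℕ → Z) (η : ℕ → ℝ) (hη : ∀ k, 0 ≤ η k) (zs : Z)
    (hHPE : ∀ k : ℕ, 1 ≤ k →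
      ⟪M (zt k - z k), zt k - z k⟫ + η k ≤
        σ * ⟪M (zt k - z (k - 1)), zt k - z (k - 1)⟫ + η (k - 1))
    (hkey : ∀ k : ℕ, 1 ≤ k →
      ⟪M (zt k - z (k - 1)), zt k - z (k - 1)⟫ - ⟪M (zt k - z k), zt k - z k⟫ ≤
        ⟪M (zs - z (k - 1)), zs - z (k - 1)⟫ - ⟪M (zs - z k), zs - z k⟫) :
    ∀ k : ℕ, 1 ≤ k →
      ∑ i ∈ Finset.Icc 1 k, (1 - σ) * ⟪M (zt i - z (i - 1)), zt i - z (i - 1)⟫ ≤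
        ⟪M (zs - z 0), zs - z 0⟫ + η 0 := by
  have main : ∀ k : ℕ,
      ∑ i ∈ Finset.Icc 1 k, (1 - σ) * ⟪M (zt i - z (i - 1)), zt i - z (i - 1)⟫ ≤
        (⟪M (zs - z 0), zs - z 0⟫ + η 0) - (⟪M (zs - z k), zs - z k⟫ + η k) := by
    intro k
    induction k with
    | zero => simp
    | succ n ih =>
      rw [Finset.sum_Icc_succ_top (by omega : 1 ≤ n + 1)]
      have h1 := hHPE (n + 1) (by omega)
      have h2 := hkey (n + 1) (by omega)
      simp only [Nat.add_sub_cancel] at h1 h2 ⊢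
      nlinarith [ih]
  intro k _
  have := main k
  have h1 := hMpsd (zs - z k)
  have h2 := hη k
  linarith
end
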